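/- For every atom p and every formula φ in which p does not occur, the following are equivalent: (1) φ is valid in the class of all frames; (2) τ_p(φ) is valid in the class of all frames; (3) τ_p(φ) is valid in the class of all dense frames. -/
import Mathlib


/-- Formulas of unimodal modal logic. -/
inductive Formula : Type
  | atom : ℕ → Formula
  | falsum : Formula
  | neg : Formula → Formula
  | and : Formula → Formula → Formula
  | box : Formula → Formula
deriving DecidableEq

/-- Material implication, as the usual classical abbreviation. -/
def Formula.imp (φ ψ : Formula) : Formula := .neg (.and φ (.neg ψ))

/-- Satisfaction of a formula at a world of a model `(W, R, V)`. -/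
def Sat {W : Type} (R : W → W → Prop) (V : ℕ → Set W) : W → Formula → Prop
  | w, .atom p => w ∈ V p
  | _, .falsum => False
  | w, .neg φ => ¬ Sat R V w φ
  | w, .and φ ψ => Sat R V w φ ∧ Sat R V w ψ
  | w, .box φ => ∀ v, R w v → Sat R V v φ

/-- The atom `p` occurs in the formula. -/
def Occurs (p : ℕ) : Formula → Prop
  | .atom q => p = q
  | .falsum => False
  | .neg φ => Occurs p φ
  | .and φ ψ => Occurs p φ ∨ Occurs p ψ
  | .box φ => Occurs p φ

/-- The translation `τ_p`:  atoms, `⊥` are unchanged, it commutes with the Boolean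
connectives, and `τ_p(□φ) = □(p → τ_p(φ))`. -/
def tau (p : ℕ) : Formula → Formula
  | .atom q => .atom q
  | .falsum => .falsum
  | .neg φ => .neg (tau p φ)
  | .and φ ψ => .and (tau p φ) (tau p ψ)
  | .box φ => .box (.imp (.atom p) (tau p φ))

/-- A frame is dense if every `R`-edge admits an intermediate point. -/
def Dense' {W : Type} (R : W → W → Prop) : Prop :=
  ∀ s t : W, R s t → ∃ u : W, R s u ∧ R u t

/-- Validity in the class of all frames. -/
def ValidAll (φ : Formula) : Prop :=
  ∀ (W : Type) (_ : Nonempty W) (R : W → W → Prop) (V : ℕ → Set W) (w : W),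
    Sat R V w φ

/-- Validity in the class of all dense frames. -/
def ValidDense (φ : Formula) : Prop :=
  ∀ (W : Type) (_ : Nonempty W) (R : W → W → Prop), Dense' R →
    ∀ (V : ℕ → Set W) (w : W), Sat R V w φ

lemma sat_tau (p : ℕ) (φ : Formula) {W : Type} (R : W → W → Prop) (V : ℕ → Set W) :
    ∀ w, Sat R V w (tau p φ) ↔ Sat (fun a b => R a b ∧ b ∈ V p) V w φ := by
  induction φ with
  | atom q => intro w; simp [tau, Sat]
  | falsum => intro w; simp [tau, Sat]
  | neg ψ ih => intro w; simp only [tau, Sat, ih]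
  | and ψ χ ih1 ih2 => intro w; simp only [tau, Sat, ih1, ih2]
  | box ψ ih =>
    intro w
    simp only [tau, Sat, Formula.imp, ih, not_and, not_not]
    constructor
    · intro H v hv; exact H v hv.1 hv.2
    · intro H v hv hp; exact H v ⟨hv, hp⟩

lemma sat_val {W : Type} (R : W → W → Prop) (V V' : ℕ → Set W) (p : ℕ)
    (hV : ∀ q, q ≠ p → V q = V' q) :
    ∀ φ, ¬ Occurs p φ → ∀ w, Sat R V w φ ↔ Sat R V' w φ := by
  intro φ
  induction φ with
  | atom q => intro hocc w; simp only [Sat, hV q (fun hq => hocc hq.symm)]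
  | falsum => intro _ w; simp [Sat]
  | neg ψ ih => intro hocc w; simp only [Sat, ih hocc]
  | and ψ χ ih1 ih2 =>
    intro hocc w
    simp only [Sat, ih1 (fun h1 => hocc (Or.inl h1)), ih2 (fun h2 => hocc (Or.inr h2))]
  | box ψ ih =>
    intro hocc w
    simp only [Sat]
    exact forall_congr' fun v => imp_congr_right fun _ => ih hocc v

/-- The densified relation: a midpoint `inr (a,b)` for each edge, reflexive on `inr`. -/
def DR {W : Type} (R : W → W → Prop) : (W ⊕ W × W) → (W ⊕ W × W) → Prop
  | .inl s, .inl t => R s t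
  | .inl s, .inr e => s = e.1 ∧ R e.1 e.2
  | .inr e, .inl t => t = e.2 ∧ R e.1 e.2
  | .inr e, .inr e' => e = e'

/-- The valuation on the densified frame: `p` holds exactly on original worlds. -/
def DV {W : Type} (V : ℕ → Set W) (p q : ℕ) : Set (W ⊕ W × W) :=
  fun x => match x with
  | .inl s => q = p ∨ s ∈ V q
  | .inr _ => False

lemma dr_dense {W : Type} (R : W → W → Prop) : Dense' (DR R) := by
  intro s t hst
  cases s with
  | inl s =>
    cases t with
    | inl t => exact ⟨.inr (s, t), ⟨rfl, hst⟩, ⟨rfl, hst⟩⟩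
    | inr e => exact ⟨.inr e, hst, rfl⟩
  | inr e =>
    cases t with
    | inl t => exact ⟨.inr e, rfl, hst⟩
    | inr e' => exact ⟨.inr e, rfl, hst⟩

lemma sat_dlift {W : Type} (R : W → W → Prop) (V : ℕ → Set W) (p : ℕ) :
    ∀ φ, ¬ Occurs p φ → ∀ s, Sat (DR R) (DV V p) (Sum.inl s) (tau p φ) ↔ Sat R V s φ := by
  intro φ
  induction φ with
  | atom q =>
    intro hocc s
    have hq : ¬ (q = p) := fun hq => hocc hq.symm
    simp only [tau, Sat]
    show (q = p ∨ s ∈ V q) ↔ s ∈ V q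
    simp [hq]
  | falsum => intro _ s; simp [tau, Sat]
  | neg ψ ih => intro hocc s; simp only [tau, Sat, ih hocc]
  | and ψ χ ih1 ih2 =>
    intro hocc s
    simp only [tau, Sat]
    exact and_congr (ih1 (fun h1 => hocc (Or.inl h1)) s) (ih2 (fun h2 => hocc (Or.inr h2)) s)
  | box ψ ih =>
    intro hocc s
    simp only [tau, Sat, Formula.imp, not_and, not_not]
    constructor
    · intro H t hst
      have hp : Sum.inl t ∈ DV V p p := Or.inl rfl
      exact (ih hocc t).mp (H (Sum.inl t) hst hp)
    · intro H v hv hp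
      cases v with
      | inl t => exact (ih hocc t).mpr (H t hv)
      | inr e => exact absurd hp (fun h => h)

/-- If `p` does not occur in `φ`, the following are equivalent: (1) `φ` is valid in the
class of all frames; (2) `τ_p(φ)` is valid in the class of all frames; (3) `τ_p(φ)`
is valid in the class of all dense frames. -/
theorem stmt5 (p : ℕ) (φ : Formula) (h : ¬ Occurs p φ) :
    (ValidAll φ ↔ ValidAll (tau p φ)) ∧
    (ValidAll (tau p φ) ↔ ValidDense (tau p φ)) := by
  have A : ValidAll φ → ValidAll (tau p φ) := by
    intro hv W hW R V w
    exact (sat_tau p φ R V w).mpr (hv W hW _ V w)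
  have C : ValidAll (tau p φ) → ValidDense (tau p φ) := by
    intro hv W hW R _ V w
    exact hv W hW R V w
  have D : ValidDense (tau p φ) → ValidAll φ := by
    intro hv W hW R V w
    have := hv (W ⊕ W × W) ⟨.inl (Classical.choice hW)⟩ (DR R) (dr_dense R) (DV V p)
      (Sum.inl w)
    exact (sat_dlift R V p φ h w).mp this
  exact ⟨⟨A, fun h2 => D (C h2)⟩, ⟨C, fun h3 => A (D h3)⟩⟩
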